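/- arXiv:0906.3724 — 2 statements merged into one kernel-verified Lean document; each statement's English description precedes it below -/
import Mathlib

section
/- Let G be an ordered graph on [n] and let r ∈ ℕ with r ≥ 1. Then |{H ∈ ∂G : m(H) ≤ m(G) + 2r + 1}| ≥ (1/2)(1 − 1/r)·n − m(G)/2, as an inequality of real numbers. -/
namespace OrderedGraphs

/-- The order-preserving map `Fin (n-1) → Fin n` that skips the vertex `v`. -/
def delMap {n : ℕ} (v : Fin n) (i : Fin (n - 1)) : Fin n :=
  if h : (i : ℕ) < (v : ℕ) then ⟨i, lt_trans h v.isLt⟩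
  else ⟨(i : ℕ) + 1, by have h1 := i.isLt; have h2 := v.isLt; omega⟩

/-- `erase G v` is the ordered graph `G − v` on `[n-1]`, obtained by deleting `v` and
relabelling the remaining vertices order-preservingly. -/
def erase {n : ℕ} (G : SimpleGraph (Fin n)) (v : Fin n) : SimpleGraph (Fin (n - 1)) where
  Adj i j := G.Adj (delMap v i) (delMap v j)
  symm := ⟨fun i j h => G.adj_symm h⟩
  loopless := ⟨fun i h => G.irrefl h⟩

/-- The shadow `∂G` of a single ordered graph. -/
def shadow {n : ℕ} (G : SimpleGraph (Fin n)) : Set (SimpleGraph (Fin (n - 1))) :=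
  {H | ∃ v : Fin n, H = erase G v}

/-- The shadow `∂𝒢` of a collection of ordered graphs. -/
def shadowCol {n : ℕ} (𝒢 : Set (SimpleGraph (Fin n))) : Set (SimpleGraph (Fin (n - 1))) :=
  ⋃ G ∈ 𝒢, shadow G

/-- `x ∼ y` : the relation `Γ(x) \ {y} = Γ(y) \ {x}`. -/
def simRel {n : ℕ} (G : SimpleGraph (Fin n)) (x y : Fin n) : Prop :=
  G.neighborSet x \ {y} = G.neighborSet y \ {x}

/-- A set of consecutive vertices whose elements are pairwise `∼`-equivalent. -/
def IsHomInterval {n : ℕ} (G : SimpleGraph (Fin n)) (B : Set (Fin n)) : Prop :=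
  B.OrdConnected ∧ ∀ x ∈ B, ∀ y ∈ B, simRel G x y

/-- A homogeneous block: a maximal nonempty set of consecutive vertices whose elements are
pairwise `∼`-equivalent. -/
def IsHomBlock {n : ℕ} (G : SimpleGraph (Fin n)) (B : Set (Fin n)) : Prop :=
  B.Nonempty ∧ IsHomInterval G B ∧ ∀ C, IsHomInterval G C → B ⊆ C → B = C

open Classical in
/-- The excess `m(G) = Σ_{B : |B| ≥ 3} (|B| − 2)`, the sum over homogeneous blocks;
(truncated ℕ-subtraction makes blocks with `|B| ≤ 2` contribute `0`). -/
noncomputable def excess {n : ℕ} (G : SimpleGraph (Fin n)) : ℕ :=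
  ∑ B ∈ Finset.univ.filter (fun B : Finset (Fin n) => IsHomBlock G ↑B), (B.card - 2)

/-- Two ordered graphs have the same type. -/
def SameType {n n' : ℕ} (G : SimpleGraph (Fin n)) (G' : SimpleGraph (Fin n')) : Prop :=
  ∃ (k : ℕ) (B : Fin k → Set (Fin n)) (B' : Fin k → Set (Fin n')),
    (∀ i, IsHomBlock G (B i)) ∧ (∀ C, IsHomBlock G C → ∃ i, C = B i) ∧
    (∀ i j : Fin k, i < j → ∀ x ∈ B i, ∀ y ∈ B j, x < y) ∧
    (∀ i, IsHomBlock G' (B' i)) ∧ (∀ C, IsHomBlock G' C → ∃ i, C = B' i) ∧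
    (∀ i j : Fin k, i < j → ∀ x ∈ B' i, ∀ y ∈ B' j, x < y) ∧
    (∀ i j : Fin k, (∀ u ∈ B i, ∀ v ∈ B j, u ≠ v → G.Adj u v) ↔
            (∀ u ∈ B' i, ∀ v ∈ B' j, u ≠ v → G'.Adj u v)) ∧
    (∀ i, (B i).ncard = 1 ↔ (B' i).ncard = 1)

/-- The shadow within types `∂_τ G`. -/
def typeShadow {n : ℕ} (G : SimpleGraph (Fin n)) : Set (SimpleGraph (Fin (n - 1))) :=
  {H ∈ shadow G | SameType H G}

/-- The shadow within types `∂_τ 𝒢` of a collection. -/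
def typeShadowCol {n : ℕ} (𝒢 : Set (SimpleGraph (Fin n))) : Set (SimpleGraph (Fin (n - 1))) :=
  ⋃ G ∈ 𝒢, typeShadow G

/-- `Z^d(n) = {x ∈ ℤ^d : x_i ≥ 0, Σ_i x_i = n}`. -/
def Zdn (d n : ℕ) : Set (Fin d → ℤ) := {x | (∀ i, 0 ≤ x i) ∧ ∑ i, x i = (n : ℤ)}

/-- A line in `Z^d(n)`, determined by two coordinates `j, k`. -/
def ZLine (d n : ℕ) (j k : Fin d) : Set (Fin d → ℤ) :=
  {x ∈ Zdn d n | ∀ i, i ≠ j → i ≠ k → x i = 0}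

/-- The shadow of a subset `A ⊆ Z^d(n)`. -/
def Zshadow (d n : ℕ) (A : Set (Fin d → ℤ)) : Set (Fin d → ℤ) :=
  {x ∈ Zdn d (n - 1) | ∃ y ∈ A, ∀ i, x i ≤ y i}

/-- `phiAt G d x` : `x ∈ ℤ^d` is the image `φ(G)` of `G`, i.e. the homogeneous blocks of `G`
of size at least `2`, in increasing order, are `B_1 < ⋯ < B_d` and `x i = |B_i| − 2`. -/
def phiAt {n : ℕ} (G : SimpleGraph (Fin n)) (d : ℕ) (x : Fin d → ℤ) : Prop :=
  ∃ B : Fin d → Set (Fin n),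
    (∀ i, IsHomBlock G (B i) ∧ 2 ≤ (B i).ncard) ∧
    (∀ C, IsHomBlock G C → 2 ≤ C.ncard → ∃ i, C = B i) ∧
    (∀ i j : Fin d, i < j → ∀ u ∈ B i, ∀ v ∈ B j, u < v) ∧
    (∀ i, x i = ((B i).ncard : ℤ) - 2)

/-- `𝒢₀` (a set of ordered graphs of a common type, of common excess `m`) contains a line:
some subset `S ⊆ 𝒢₀` has `φ(S)` equal to a line in `Z^d(m)`. -/
def ContainsLine {n : ℕ} (𝒢₀ : Set (SimpleGraph (Fin n))) (m : ℕ) : Prop :=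
  ∃ S ⊆ 𝒢₀, ∃ (d : ℕ) (j k : Fin d),
    {x : Fin d → ℤ | ∃ G ∈ S, phiAt G d x} = ZLine d m j k

/-- `eraseSet G X` is `G − X`: delete all vertices of `X` and relabel order-preservingly. -/
noncomputable def eraseSet {n : ℕ} (G : SimpleGraph (Fin n)) (X : Finset (Fin n)) :
    SimpleGraph (Fin (n - X.card)) where
  Adj i j := G.Adj ((Xᶜ.orderIsoOfFin (by rw [Finset.card_compl, Fintype.card_fin]) i) : Fin n)
                   ((Xᶜ.orderIsoOfFin (by rw [Finset.card_compl, Fintype.card_fin]) j) : Fin n)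
  symm := ⟨fun i j h => G.adj_symm h⟩
  loopless := ⟨fun i h => G.irrefl h⟩

/-- A semi-homogeneous block: a set `B` of consecutive vertices such that all vertices of `B`
have the same neighbourhood outside `B`, and, for some `L ⊆ ℕ`, two vertices `x, y ∈ B` are
adjacent iff `|x − y| ∈ L`. -/
def IsSemiHomBlock {n : ℕ} (G : SimpleGraph (Fin n)) (B : Set (Fin n)) : Prop :=
  B.OrdConnected ∧
  (∀ x ∈ B, ∀ y ∈ B, G.neighborSet x \ B = G.neighborSet y \ B) ∧
  ∃ L : Set ℕ, ∀ x ∈ B, ∀ y ∈ B, (G.Adj x y ↔ ((x : ℤ) - (y : ℤ)).natAbs ∈ L)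

/-!
Write `j ∼ j + 1` for consecutive twins; the excess of `G` is the number of `j` with
`j ∼ j + 1 ∼ j + 2`. Deleting `v` creates such a triple only next to `v` or by mending a break
`j ≁ j + 1` whose sole witness was `v`. A break has at most one such witness, so
`m(G - v) ≤ m(G) + 2 M_v + 2` with `∑ M_v < n`, and at most `n / r` vertices push the excess
beyond `m(G) + 2r + 1`. On the other hand, if `G - a = G - b = G - c` with `a < b < c`, comparing
adjacencies along the two induced shifts makes `[a, c]` a homogeneous interval. Hence every fibre
of `v ↦ G - v` with more than two vertices is a homogeneous block, and the at least `n - n / r`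
remaining vertices have at least `(n - n / r - m(G)) / 2` distinct deletions.
-/

end OrderedGraphs

open Finset

lemma Nat.count_eq_count_iff {p : ℕ → Prop} [DecidablePred p] {i j : ℕ} (h : i ≤ j) :
    Nat.count p i = Nat.count p j ↔ ∀ k, i ≤ k → k < j → ¬ p k := by
  obtain ⟨d, rfl⟩ := Nat.exists_eq_add_of_le h
  rw [Nat.count_add, left_eq_add, Nat.count_iff_forall_not]
  exact ⟨fun h k hk₁ hk₂ => by simpa [Nat.add_sub_cancel' hk₁] using h (k - i) (by omega),
    fun h k hk => h (i + k) (by omega) (by omega)⟩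

lemma Finset.card_le_two_mul_card_image_add {α β : Type*} [Fintype α] [DecidableEq β]
    (s : Finset α) (f : α → β) : #s ≤ 2 * #(s.image f) + ∑ b ∈ s.image f, (#{a | f a = b} - 2) := by
  rw [card_eq_sum_card_image f s]
  calc ∑ b ∈ s.image f, #{a ∈ s | f a = b}
      ≤ ∑ b ∈ s.image f, (2 + (#{a | f a = b} - 2)) := sum_le_sum fun b _ => by
        have := card_le_card (filter_subset_filter (fun a => f a = b) (subset_univ s))
        omega
    _ = _ := by rw [sum_add_distrib, sum_const, smul_eq_mul, mul_comm]

namespace OrderedGraphs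

section Adjacency

variable {n : ℕ} (G : SimpleGraph (Fin n))

/-- Adjacency read on all of `ℕ` (false outside `[0, n)`), so that vertex arithmetic needs no
`Fin` bounds. -/
def adjNat (x y : ℕ) : Prop :=
  ∃ (hx : x < n) (hy : y < n), G.Adj ⟨x, hx⟩ ⟨y, hy⟩

@[simp]
lemma adjNat_val {x y : Fin n} : adjNat G x y ↔ G.Adj x y :=
  ⟨fun ⟨_, _, h⟩ => h, fun h => ⟨x.isLt, y.isLt, h⟩⟩

lemma adjNat_comm {x y : ℕ} : adjNat G x y ↔ adjNat G y x :=
  ⟨fun ⟨hx, hy, h⟩ => ⟨hy, hx, h.symm⟩, fun ⟨hy, hx, h⟩ => ⟨hx, hy, h.symm⟩⟩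

lemma not_adjNat_self (x : ℕ) : ¬ adjNat G x x :=
  fun ⟨_, _, h⟩ => G.irrefl h

lemma ext_adjNat {G G' : SimpleGraph (Fin n)} (h : ∀ x y, adjNat G x y ↔ adjNat G' x y) :
    G = G' := by
  ext x y
  simpa using h x y

def Twin (x y : ℕ) : Prop :=
  ∀ w, w ≠ x → w ≠ y → (adjNat G x w ↔ adjNat G y w)

def TwinOff (v x y : ℕ) : Prop :=
  ∀ w, w ≠ x → w ≠ y → w ≠ v → (adjNat G x w ↔ adjNat G y w)

lemma not_adjNat_of_le {x y : ℕ} (hy : n ≤ y) : ¬ adjNat G x y :=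
  fun ⟨_, hy', _⟩ => hy'.not_ge hy

lemma twin_val_iff {x y : Fin n} :
    Twin G x y ↔ ∀ w : Fin n, w ≠ x → w ≠ y → (G.Adj x w ↔ G.Adj y w) := by
  refine ⟨fun h w hwx hwy => ?_, fun h w hwx hwy => ?_⟩
  · simpa using h w (Fin.val_ne_of_ne hwx) (Fin.val_ne_of_ne hwy)
  · by_cases hw : w < n
    · have := h ⟨w, hw⟩ (fun e => hwx (congrArg Fin.val e)) (fun e => hwy (congrArg Fin.val e))
      rwa [← adjNat_val, ← adjNat_val] at this
    · exact iff_of_false (not_adjNat_of_le G (not_lt.1 hw)) (not_adjNat_of_le G (not_lt.1 hw))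

lemma simRel_iff_twin {x y : Fin n} : simRel G x y ↔ Twin G x y := by
  rw [twin_val_iff, simRel, Set.ext_iff]
  refine ⟨fun h w hwx hwy => ?_, fun h w => ?_⟩
  · simpa [hwx, hwy] using h w
  · by_cases hwx : w = x
    · subst hwx; simp
    by_cases hwy : w = y
    · subst hwy; simp
    simp [hwx, hwy, h w hwx hwy]

lemma twin_refl (x : ℕ) : Twin G x x := fun _ _ _ => Iff.rfl

variable {G}

lemma Twin.symm {x y : ℕ} (h : Twin G x y) : Twin G y x :=
  fun w hy hx => (h w hx hy).symm

lemma Twin.trans {x y z : ℕ} (h₁ : Twin G x y) (h₂ : Twin G y z) : Twin G x z := by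
  by_cases hxy : x = y
  · exact hxy ▸ h₂
  by_cases hyz : y = z
  · exact hyz ▸ h₁
  by_cases hxz : x = z
  · exact hxz ▸ twin_refl G x
  intro w hwx hwz
  by_cases hwy : w = y
  · subst hwy
    calc adjNat G x w ↔ adjNat G w x := adjNat_comm G
      _ ↔ adjNat G z x := h₂ x hxy hxz
      _ ↔ adjNat G x z := adjNat_comm G
      _ ↔ adjNat G w z := h₁ z (Ne.symm hxz) (Ne.symm hyz)
      _ ↔ adjNat G z w := adjNat_comm G
  · exact (h₁ w hwx hwy).trans (h₂ w hwy hwz)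

lemma Twin.of_twinOff {v v' x y : ℕ} (hv : TwinOff G v x y) (hv' : TwinOff G v' x y)
    (hvv' : v ≠ v') : Twin G x y := fun w hwx hwy =>
  if hwv : w = v then hv' w hwx hwy (hwv ▸ hvv') else hv w hwx hwy hwv

end Adjacency

def skip (v i : ℕ) : ℕ := if i < v then i else i + 1

lemma skip_of_lt {v i : ℕ} (h : i < v) : skip v i = i := if_pos h

lemma skip_of_le {v i : ℕ} (h : v ≤ i) : skip v i = i + 1 := if_neg (not_lt.2 h)

lemma skip_ne (v i : ℕ) : skip v i ≠ v := by
  unfold skip; split_ifs <;> omega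

lemma exists_skip_eq {v w : ℕ} (h : w ≠ v) : ∃ i, skip v i = w :=
  if hw : w < v then ⟨w, if_pos hw⟩ else ⟨w - 1, by unfold skip; split_ifs <;> omega⟩

lemma skip_injective (v : ℕ) : Function.Injective (skip v) := by
  intro i k h
  unfold skip at h
  split_ifs at h <;> omega

lemma skip_succ_of_ne {j i : ℕ} (h : i ≠ j) : skip (j + 1) i = skip j i := by
  unfold skip; split_ifs <;> omega

lemma delMap_val {n : ℕ} (v : Fin n) (i : Fin (n - 1)) : (delMap v i : ℕ) = skip v i := by
  unfold delMap skip
  split <;> rfl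

section Erase

variable {n : ℕ} (G : SimpleGraph (Fin n))

lemma erase_adj {v : Fin n} {i k : Fin (n - 1)} :
    (erase G v).Adj i k ↔ G.Adj (delMap v i) (delMap v k) := Iff.rfl

lemma adjNat_erase (v : Fin n) (i k : ℕ) :
    adjNat (erase G v) i k ↔ adjNat G (skip v i) (skip v k) := by
  have hv := v.isLt
  have hlt : ∀ {i}, skip v i < n ↔ i < n - 1 := by
    intro i; unfold skip; split_ifs <;> omega
  have e : ∀ i (hi : i < n - 1), delMap v ⟨i, hi⟩ = ⟨skip v i, hlt.2 hi⟩ :=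
    fun i _ => Fin.ext (delMap_val v _)
  constructor
  · rintro ⟨hi, hk, h⟩
    refine ⟨hlt.2 hi, hlt.2 hk, ?_⟩
    rwa [erase_adj, e, e] at h
  · rintro ⟨hi, hk, h⟩
    exact ⟨hlt.1 hi, hlt.1 hk, by rwa [erase_adj, e, e]⟩

lemma erase_eq_erase_succ {j : ℕ} (hj : j + 1 < n) (h : Twin G j (j + 1)) :
    erase G ⟨j, by omega⟩ = erase G ⟨j + 1, hj⟩ := by
  have hjj : skip j j = j + 1 := if_neg (lt_irrefl j)
  have hjj' : skip (j + 1) j = j := if_pos j.lt_succ_self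
  have hne : ∀ i, i ≠ j → skip j i ≠ j ∧ skip j i ≠ j + 1 := fun i hi =>
    ⟨skip_ne j i, fun e => hi (skip_injective j (e.trans hjj.symm))⟩
  refine ext_adjNat fun x y => ?_
  simp only [adjNat_erase]
  by_cases hx : x = j <;> by_cases hy : y = j
  · subst hx hy
    exact iff_of_false (not_adjNat_self G _) (not_adjNat_self G _)
  · rw [hx, hjj, hjj', skip_succ_of_ne hy]
    exact (h _ (hne y hy).1 (hne y hy).2).symm
  · rw [hy, hjj, hjj', skip_succ_of_ne hx, adjNat_comm G, adjNat_comm G (x := skip j x)]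
    exact (h _ (hne x hx).1 (hne x hx).2).symm
  · rw [skip_succ_of_ne hx, skip_succ_of_ne hy]

lemma erase_eq_of_twin_Ico {x y : Fin n} (hxy : x ≤ y)
    (h : ∀ j : ℕ, x ≤ j → j < y → Twin G j (j + 1)) : erase G x = erase G y := by
  suffices ∀ k : ℕ, x ≤ k → ∀ hk : k < n, (∀ j : ℕ, x ≤ j → j < k → Twin G j (j + 1)) →
      erase G x = erase G ⟨k, hk⟩ from this y hxy y.isLt h
  intro k hk
  induction k, hk using Nat.le_induction with
  | base => exact fun _ _ => rfl
  | succ k hxk ih =>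
    intro hk htw
    rw [ih (by omega) fun j h1 h2 => htw j h1 (by omega)]
    exact erase_eq_erase_succ G hk (htw k hxk k.lt_succ_self)

variable {G} in
lemma Twin.twinOff_of_erase {v : Fin n} {x y : ℕ} (h : Twin (erase G v) x y) :
    TwinOff G v (skip v x) (skip v y) := by
  intro w hwx hwy hwv
  obtain ⟨i, rfl⟩ := exists_skip_eq hwv
  have := h i (fun e => hwx (e ▸ rfl)) (fun e => hwy (e ▸ rfl))
  rwa [adjNat_erase, adjNat_erase] at this

end Erase

def shiftOn (a c x : ℕ) : ℕ := if a ≤ x ∧ x < c then x + 1 else x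

lemma shiftOn_of_mem {a c x : ℕ} (h₁ : a ≤ x) (h₂ : x < c) : shiftOn a c x = x + 1 :=
  if_pos ⟨h₁, h₂⟩

lemma shiftOn_of_not_mem {a c x : ℕ} (h : ¬ (a ≤ x ∧ x < c)) : shiftOn a c x = x :=
  if_neg h

lemma skip_eq_shiftOn_skip {a c : ℕ} (h : a ≤ c) (i : ℕ) :
    skip a i = shiftOn a c (skip c i) := by
  unfold skip shiftOn; split_ifs <;> omega

def ShiftInvariant (A : ℕ → ℕ → Prop) (a c : ℕ) : Prop :=
  ∀ x y, x ≠ c → y ≠ c → (A (shiftOn a c x) (shiftOn a c y) ↔ A x y)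

namespace ShiftInvariant

variable {A : ℕ → ℕ → Prop} {a b c : ℕ}

lemma iff_diff (hA : ShiftInvariant A a c) {u t : ℕ} (hau : a ≤ u) (hut : u ≤ t) (htc : t ≤ c) :
    A u t ↔ A a (a + (t - u)) := by
  induction u, hau using Nat.le_induction generalizing t with
  | base => rw [show a + (t - a) = t by omega]
  | succ u hau ih =>
    have h := hA u (t - 1) (by omega) (by omega)
    rw [shiftOn_of_mem hau (by omega), shiftOn_of_mem (by omega) (by omega),
      Nat.sub_add_cancel (by omega)] at h
    rw [h, ih (by omega) (by omega), show t - 1 - u = t - (u + 1) by omega]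

lemma iff_add_one (hab : ShiftInvariant A a b) (hac : ShiftInvariant A a c) (h₁ : a < b)
    (h₂ : b < c) {d : ℕ} (hd : 1 ≤ d) (hdc : a + d ≤ c) : A a (a + d) ↔ A a (a + 1) := by
  induction d, hd using Nat.le_induction with
  | base => rfl
  | succ d hd ih =>
    -- compare the pairs `(u, w)` and `(u + 1, w)` with `u < b < w`, at distance `d + 1` and `d`
    set w := max (b + 1) (a + d + 1)
    set u := w - (d + 1)
    have hw : b < w ∧ a + d + 1 ≤ w ∧ w ≤ c := ⟨by omega, by omega, by omega⟩
    have hstep := hab u w (by omega) (by omega)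
    rw [shiftOn_of_mem (by omega) (by omega), shiftOn_of_not_mem (by omega)] at hstep
    rw [← show w - u = d + 1 by omega, ← hac.iff_diff (by omega) (by omega) hw.2.2, ← hstep,
      hac.iff_diff (by omega) (by omega) hw.2.2, show w - (u + 1) = d by omega]
    exact ih (by omega)

lemma twin (hA : ∀ x y, A x y ↔ A y x) (hab : ShiftInvariant A a b)
    (hac : ShiftInvariant A a c) (h₁ : a < b) (h₂ : b < c) {j : ℕ} (hj₁ : a ≤ j) (hj₂ : j < c) :
    ∀ w, w ≠ j → w ≠ j + 1 → (A j w ↔ A (j + 1) w) := by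
  have inside : ∀ u t, a ≤ u → u < t → t ≤ c → (A u t ↔ A a (a + 1)) := fun u t hau hut htc =>
    (hac.iff_diff hau hut.le htc).trans (hab.iff_add_one hac h₁ h₂ (by omega) (by omega))
  intro w hwj hwj'
  by_cases hw : a ≤ w ∧ w ≤ c
  · rcases lt_or_gt_of_ne hwj with hlt | hgt
    · rw [hA j, hA (j + 1)]
      exact (inside w j hw.1 hlt (by omega)).trans
        (inside w (j + 1) hw.1 (by omega) (by omega)).symm
    · exact (inside j w hj₁ hgt hw.2).trans (inside (j + 1) w (by omega) (by omega) hw.2).symm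
  · have h := hac j w (by omega) (by omega)
    rw [shiftOn_of_mem hj₁ hj₂, shiftOn_of_not_mem (by omega)] at h
    exact h.symm

end ShiftInvariant

section Erase

variable {n : ℕ} (G : SimpleGraph (Fin n))

lemma shiftInvariant_of_erase_eq {a c : Fin n} (hac : a ≤ c) (h : erase G a = erase G c) :
    ShiftInvariant (adjNat G) a c := by
  intro x y hx hy
  obtain ⟨i, rfl⟩ := exists_skip_eq hx
  obtain ⟨k, rfl⟩ := exists_skip_eq hy
  rw [← skip_eq_shiftOn_skip hac, ← skip_eq_shiftOn_skip hac, ← adjNat_erase, ← adjNat_erase, h]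

lemma twin_succ_of_erase_eq {a b c : Fin n} (hab : a < b) (hbc : b < c)
    (h₁ : erase G a = erase G b) (h₂ : erase G a = erase G c) :
    ∀ j : ℕ, a ≤ j → j < c → Twin G j (j + 1) := fun _ hj₁ hj₂ =>
  ShiftInvariant.twin (fun _ _ => adjNat_comm G) (shiftInvariant_of_erase_eq G hab.le h₁)
    (shiftInvariant_of_erase_eq G (hab.trans hbc).le h₂) hab hbc hj₁ hj₂

end Erase

lemma sum_card_fiber_sub_two_of_monotone {f : ℕ → ℕ} (hf : Monotone f) (N : ℕ) :
    ∑ k ∈ (range N).image f, (#{j ∈ range N | f j = k} - 2) =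
      #{j ∈ range (N - 2) | f j = f (j + 2)} := by
  rw [card_eq_sum_card_fiberwise (f := f) (t := (range N).image f)
    fun j hj => mem_image_of_mem f (mem_range.2 (by simp at hj; omega))]
  refine sum_congr rfl fun k hk => ?_
  obtain ⟨j₀, hj₀, rfl⟩ := mem_image.1 hk
  set F := {j ∈ range N | f j = f j₀}
  have hne : F.Nonempty := ⟨j₀, by simpa [F] using hj₀⟩
  have ha := mem_filter.1 (F.min'_mem hne)
  have hb := mem_filter.1 (F.max'_mem hne)
  simp only [mem_range] at ha hb
  have hF : ∀ j, j ∈ F ↔ F.min' hne ≤ j ∧ j < F.max' hne + 1 := by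
    refine fun j => ⟨fun hj => ⟨F.min'_le j hj, Nat.lt_succ_of_le (F.le_max' j hj)⟩, fun hj => ?_⟩
    have h₁ := hf hj.1
    have h₂ := hf (Nat.le_of_lt_succ hj.2)
    exact mem_filter.2 ⟨mem_range.2 (by omega), by omega⟩
  have hT : {j ∈ range (N - 2) | f j = f (j + 2) ∧ f j = f j₀} =
      Ico (F.min' hne) (F.max' hne + 1 - 2) := by
    ext j
    have h₁ := hF j
    have h₂ := hF (j + 2)
    simp only [F, mem_filter, mem_range, mem_Ico] at h₁ h₂ ⊢
    omega
  have hcard : #F = F.max' hne + 1 - F.min' hne := by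
    rw [← Nat.card_Ico]
    exact congrArg card (Finset.ext fun j => (hF j).trans mem_Ico.symm)
  rw [filter_filter, hT, Nat.card_Ico, hcard]
  omega

open Classical in
/-- The number of `j` with `j + 1 < N` (not `j < N`) such that `p j` and `p (j + 1)` hold. -/
noncomputable def pairCount (p : ℕ → Prop) (N : ℕ) : ℕ :=
  #{j ∈ range (N - 1) | p j ∧ p (j + 1)}

section Blocks

variable {n : ℕ} (G : SimpleGraph (Fin n))

open Classical in
/-- The index of the homogeneous block of `x`: the number of breaks `j ≁ j + 1` below `x`. -/
noncomputable def blockIndex (x : ℕ) : ℕ := Nat.count (fun j => ¬ Twin G j (j + 1)) x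

lemma blockIndex_mono : Monotone (blockIndex G) := by
  classical exact Nat.count_monotone _

lemma blockIndex_eq_iff {i j : ℕ} (h : i ≤ j) :
    blockIndex G i = blockIndex G j ↔ ∀ k, i ≤ k → k < j → Twin G k (k + 1) := by
  simp only [blockIndex, Nat.count_eq_count_iff h, not_not]

lemma twin_of_blockIndex_eq {i j : ℕ} (h : blockIndex G i = blockIndex G j) : Twin G i j := by
  wlog hij : i ≤ j generalizing i j
  · exact (this h.symm (by omega)).symm
  rw [blockIndex_eq_iff G hij] at h
  induction j, hij using Nat.le_induction with
  | base => exact twin_refl G i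
  | succ j hij ih =>
    exact (ih fun k h₁ h₂ => h k h₁ (by omega)).trans (h j hij j.lt_succ_self)

noncomputable def block (k : ℕ) : Finset (Fin n) := {x | blockIndex G x = k}

lemma mem_block {k : ℕ} {x : Fin n} : x ∈ block G k ↔ blockIndex G x = k := by
  simp [block]

lemma card_block (k : ℕ) : #(block G k) = #{j ∈ range n | blockIndex G j = k} := by
  rw [← card_map Fin.valEmbedding]
  congr 1
  ext j
  simp only [block, mem_map, mem_filter, mem_univ, true_and, mem_range, Fin.valEmbedding_apply]
  exact ⟨fun ⟨x, hx, hxj⟩ => hxj ▸ ⟨x.isLt, hx⟩, fun ⟨hj, hk⟩ => ⟨⟨j, hj⟩, hk, rfl⟩⟩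

lemma blockIndex_eq_of_isHomInterval {C : Set (Fin n)} (hC : IsHomInterval G C) {x y : Fin n}
    (hx : x ∈ C) (hy : y ∈ C) : blockIndex G x = blockIndex G y := by
  wlog hxy : x ≤ y generalizing x y
  · exact (this hy hx (le_of_not_ge hxy)).symm
  refine (blockIndex_eq_iff G hxy).2 fun k h₁ h₂ => ?_
  have hy' := y.isLt
  have hk : ∀ i : ℕ, (hi : i ≤ y) → x ≤ i → (⟨i, by omega⟩ : Fin n) ∈ C := fun i h₂ h₁ =>
    hC.1.out hx hy ⟨Fin.le_def.2 h₁, Fin.le_def.2 h₂⟩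
  exact (simRel_iff_twin G).1 (hC.2 _ (hk k h₂.le h₁) _ (hk (k + 1) h₂ (by omega)))

lemma isHomInterval_block (k : ℕ) : IsHomInterval G (block G k) := by
  refine ⟨⟨fun x hx y hy z hz => ?_⟩, fun x hx y hy => ?_⟩
  · simp only [mem_coe, mem_block] at hx hy ⊢
    have h₁ := blockIndex_mono G (Fin.le_def.1 hz.1)
    have h₂ := blockIndex_mono G (Fin.le_def.1 hz.2)
    omega
  · simp only [mem_coe, mem_block] at hx hy
    exact (simRel_iff_twin G).2 (twin_of_blockIndex_eq G (hx.trans hy.symm))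

lemma isHomBlock_block (x : Fin n) : IsHomBlock G (block G (blockIndex G x)) := by
  refine ⟨⟨x, by simp [mem_block]⟩, isHomInterval_block G _, fun C hC hsub => ?_⟩
  refine (Set.Subset.antisymm hsub fun y hy => ?_)
  have hx : x ∈ C := hsub (by simp [mem_block])
  simpa [mem_block] using blockIndex_eq_of_isHomInterval G hC hy hx

lemma isHomBlock_iff {B : Finset (Fin n)} :
    IsHomBlock G B ↔ ∃ x : Fin n, B = block G (blockIndex G x) := by
  refine ⟨fun ⟨⟨x, hx⟩, hB, hmax⟩ => ⟨x, ?_⟩, fun ⟨x, hx⟩ => hx ▸ isHomBlock_block G x⟩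
  refine coe_injective (hmax _ (isHomInterval_block G _) fun y hy => ?_)
  simpa [mem_block] using blockIndex_eq_of_isHomInterval G hB hy hx

end Blocks

section Excess

variable {n : ℕ} (G : SimpleGraph (Fin n))

lemma excess_eq_sum_block :
    excess G = ∑ k ∈ (range n).image (blockIndex G), (#(block G k) - 2) := by
  classical
  have hblocks : univ.filter (fun B : Finset (Fin n) => IsHomBlock G B) =
      ((range n).image (blockIndex G)).image (block G) := by
    ext B
    simp only [mem_filter, mem_univ, true_and, isHomBlock_iff, mem_image, mem_range]
    exact ⟨fun ⟨x, hx⟩ => ⟨_, ⟨x, x.isLt, rfl⟩, hx.symm⟩,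
      fun ⟨_, ⟨j, hj, hk⟩, hB⟩ => ⟨⟨j, hj⟩, hk ▸ hB.symm⟩⟩
  rw [excess, hblocks, sum_image]
  intro k₁ hk₁ k₂ _ h
  obtain ⟨j, hj, rfl⟩ := mem_image.1 hk₁
  have hmem : (⟨j, mem_range.1 hj⟩ : Fin n) ∈ block G (blockIndex G j) := (mem_block G).2 rfl
  rw [h, mem_block] at hmem
  exact hmem

lemma blockIndex_eq_add_two_iff (j : ℕ) :
    blockIndex G j = blockIndex G (j + 2) ↔ Twin G j (j + 1) ∧ Twin G (j + 1) (j + 2) := by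
  rw [blockIndex_eq_iff G (by omega)]
  refine ⟨fun h => ⟨h j le_rfl (by omega), h (j + 1) (by omega) (by omega)⟩, ?_⟩
  rintro ⟨h₀, h₁⟩ k hk₁ hk₂
  obtain rfl | rfl : k = j ∨ k = j + 1 := by omega
  exacts [h₀, h₁]

lemma excess_eq_pairCount : excess G = pairCount (fun j => Twin G j (j + 1)) (n - 1) := by
  classical
  rw [excess_eq_sum_block]
  simp only [card_block]
  rw [sum_card_fiber_sub_two_of_monotone (blockIndex_mono G), pairCount,
    show n - 1 - 1 = n - 2 by omega]
  exact congrArg card (filter_congr fun j _ => blockIndex_eq_add_two_iff G j)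

end Excess

open Classical in
lemma pairCount_le_pairCount_add (p q : ℕ → Prop) (N : ℕ) :
    pairCount q N ≤ pairCount p N + 2 * #{j ∈ range N | q j ∧ ¬ p j} := by
  classical
  set D := {j ∈ range N | q j ∧ ¬ p j}
  have hsub : {j ∈ range (N - 1) | q j ∧ q (j + 1)} ⊆ {j ∈ range (N - 1) | p j ∧ p (j + 1)} ∪
      (D ∪ {j ∈ range (N - 1) | q (j + 1) ∧ ¬ p (j + 1)}) := by
    intro j
    simp only [D, mem_filter, mem_union, mem_range]
    rintro ⟨hj, hq₀, hq₁⟩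
    by_cases hp₀ : p j
    · by_cases hp₁ : p (j + 1)
      · exact Or.inl ⟨hj, hp₀, hp₁⟩
      · exact Or.inr (Or.inr ⟨hj, hq₁, hp₁⟩)
    · exact Or.inr (Or.inl ⟨by omega, hq₀, hp₀⟩)
  have hshift : #{j ∈ range (N - 1) | q (j + 1) ∧ ¬ p (j + 1)} ≤ #D :=
    card_le_card_of_injOn (· + 1) (fun j hj => by
      simp only [D, mem_coe, mem_filter, mem_range] at hj ⊢
      exact ⟨by omega, hj.2⟩)
      (fun _ _ _ _ h => Nat.succ_injective h)
  have h₁ := card_le_card hsub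
  have h₂ := card_union_le {j ∈ range (N - 1) | p j ∧ p (j + 1)}
    (D ∪ {j ∈ range (N - 1) | q (j + 1) ∧ ¬ p (j + 1)})
  have h₃ := card_union_le D {j ∈ range (N - 1) | q (j + 1) ∧ ¬ p (j + 1)}
  unfold pairCount
  omega

lemma pairCount_le_of_skip {p q : ℕ → Prop} {v : ℕ} (hlt : ∀ j, j + 1 < v → p j → q j)
    (hge : ∀ j, v ≤ j → p j → q (j + 1)) (N : ℕ) :
    pairCount p (N - 1) ≤ pairCount q N + 2 := by
  classical
  unfold pairCount
  set P := {j ∈ range (N - 1 - 1) | p j ∧ p (j + 1)}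
  -- away from `j ∈ {v - 2, v - 1}`, a pair of `p` at `j` is a pair of `q` at `j` or `j + 1`
  have hsplit : P ⊆ {v - 2, v - 1} ∪ {j ∈ P | j + 2 < v ∨ v ≤ j} := by
    intro j hj
    by_cases h : j + 2 < v ∨ v ≤ j
    · exact mem_union_right _ (mem_filter.2 ⟨hj, h⟩)
    · exact mem_union_left _ (by simp only [mem_insert, mem_singleton]; omega)
  have hinj : #{j ∈ P | j + 2 < v ∨ v ≤ j} ≤ #{j ∈ range (N - 1) | q j ∧ q (j + 1)} := by
    refine card_le_card_of_injOn (fun j => if j + 2 < v then j else j + 1) (fun j hj => ?_)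
      (fun j₁ hj₁ j₂ hj₂ h => ?_)
    · simp only [P, coe_filter, mem_filter, mem_range] at hj ⊢
      obtain ⟨⟨hjN, hp₀, hp₁⟩, hj | hj⟩ := hj
      · rw [if_pos hj]
        exact ⟨by omega, hlt j (by omega) hp₀, hlt (j + 1) (by omega) hp₁⟩
      · rw [if_neg (by omega)]
        exact ⟨by omega, hge j hj hp₀, hge (j + 1) (by omega) hp₁⟩
    · simp only [P, coe_filter] at hj₁ hj₂ h
      split_ifs at h <;> omega
  calc #P ≤ _ := card_le_card hsplit
    _ ≤ _ := card_union_le _ _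
    _ ≤ 2 + #{j ∈ range (N - 1) | q j ∧ q (j + 1)} :=
      add_le_add card_le_two hinj
    _ = _ := add_comm _ _

section Deletion

variable {n : ℕ} (G : SimpleGraph (Fin n))

open Classical in
noncomputable def mendedBy (v : Fin n) : Finset ℕ :=
  {j ∈ range (n - 1) | TwinOff G v j (j + 1) ∧ ¬ Twin G j (j + 1)}

lemma excess_erase_le (v : Fin n) :
    excess (erase G v) ≤ excess G + 2 * #(mendedBy G v) + 2 := by
  have hlt : ∀ j : ℕ, j + 1 < v → Twin (erase G v) j (j + 1) → TwinOff G v j (j + 1) :=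
    fun j hj h => by simpa [skip_of_lt hj, skip_of_lt (show j < v by omega)] using
      h.twinOff_of_erase
  have hge : ∀ j : ℕ, v ≤ j → Twin (erase G v) j (j + 1) → TwinOff G v (j + 1) (j + 1 + 1) :=
    fun j hj h => by simpa [skip_of_le hj, skip_of_le (show v ≤ j + 1 by omega)] using
      h.twinOff_of_erase
  have h₁ := pairCount_le_of_skip hlt hge (n - 1)
  have h₂ := pairCount_le_pairCount_add (fun j => Twin G j (j + 1))
    (fun j => TwinOff G v j (j + 1)) (n - 1)
  rw [excess_eq_pairCount, excess_eq_pairCount, mendedBy]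
  omega

lemma disjoint_mendedBy {v w : Fin n} (h : v ≠ w) : Disjoint (mendedBy G v) (mendedBy G w) := by
  refine disjoint_left.2 fun j hv hw => ?_
  simp only [mendedBy, mem_filter] at hv hw
  exact hv.2.2 (Twin.of_twinOff hv.2.1 hw.2.1 (Fin.val_ne_of_ne h))

lemma sum_card_mendedBy_le : ∑ v, #(mendedBy G v) ≤ n - 1 := by
  classical
  rw [← card_biUnion fun v _ w _ h => disjoint_mendedBy G h]
  exact (card_le_card (biUnion_subset.2 fun v _ => filter_subset _ _)).trans (card_range _).le

lemma mul_card_filter_excess_erase_le (r : ℕ) :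
    r * #{v | excess G + 2 * r + 1 < excess (erase G v)} ≤ n := by
  calc r * #{v | excess G + 2 * r + 1 < excess (erase G v)}
      ≤ ∑ v ∈ {v | excess G + 2 * r + 1 < excess (erase G v)}, #(mendedBy G v) := by
        rw [mul_comm, ← smul_eq_mul]
        refine card_nsmul_le_sum _ _ _ fun v hv => ?_
        have := excess_erase_le G v
        simp only [mem_filter, mem_univ, true_and] at hv
        omega
    _ ≤ ∑ v, #(mendedBy G v) := sum_le_sum_of_subset (subset_univ _)
    _ ≤ n := (sum_card_mendedBy_le G).trans (Nat.sub_le n 1)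

open Classical in
noncomputable def eraseFiber (H : SimpleGraph (Fin (n - 1))) : Finset (Fin n) :=
  {v | erase G v = H}

lemma mem_eraseFiber {H : SimpleGraph (Fin (n - 1))} {v : Fin n} :
    v ∈ eraseFiber G H ↔ erase G v = H := by
  simp [eraseFiber]

lemma erase_eq_of_blockIndex_eq {x y : Fin n} (h : blockIndex G x = blockIndex G y) :
    erase G x = erase G y := by
  wlog hxy : x ≤ y generalizing x y
  · exact (this h.symm (le_of_not_ge hxy)).symm
  exact erase_eq_of_twin_Ico G hxy ((blockIndex_eq_iff G hxy).1 h)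

lemma isHomBlock_eraseFiber {H : SimpleGraph (Fin (n - 1))} (h : 3 ≤ #(eraseFiber G H)) :
    IsHomBlock G (eraseFiber G H) := by
  set F := eraseFiber G H
  have hmem : ∀ {x}, x ∈ F ↔ erase G x = H := mem_eraseFiber G
  have hne : F.Nonempty := card_pos.1 (by omega)
  set a := F.min' hne
  set c := F.max' hne
  obtain ⟨b, hb⟩ : ((F.erase c).erase a).Nonempty := by
    rw [← card_pos, card_erase_of_mem, card_erase_of_mem (F.max'_mem hne)]
    · omega
    · exact mem_erase.2 ⟨(F.min'_lt_max'_of_card (by omega)).ne, F.min'_mem hne⟩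
  obtain ⟨hba, hbc, hbF⟩ : b ≠ a ∧ b ≠ c ∧ b ∈ F := by simpa using hb
  have hab : a < b := lt_of_le_of_ne (F.min'_le b hbF) (Ne.symm hba)
  have hbc : b < c := lt_of_le_of_ne (F.le_max' b hbF) hbc
  have hrun := twin_succ_of_erase_eq G hab hbc
    ((hmem.1 (F.min'_mem hne)).trans (hmem.1 hbF).symm)
    ((hmem.1 (F.min'_mem hne)).trans (hmem.1 (F.max'_mem hne)).symm)
  suffices F = block G (blockIndex G a) from this ▸ isHomBlock_block G a
  ext x
  rw [mem_block]
  refine ⟨fun hx => ((blockIndex_eq_iff G (F.min'_le x hx)).2 fun k h₁ h₂ =>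
    hrun k h₁ (lt_of_lt_of_le h₂ (F.le_max' x hx))).symm, fun hx => ?_⟩
  rw [hmem, erase_eq_of_blockIndex_eq G hx, ← hmem]
  exact F.min'_mem hne

lemma sum_card_eraseFiber_sub_two_le (I : Finset (SimpleGraph (Fin (n - 1)))) :
    ∑ H ∈ I, (#(eraseFiber G H) - 2) ≤ excess G := by
  classical
  rw [← sum_filter_of_ne (p := fun H => 3 ≤ #(eraseFiber G H)) fun H _ h => by omega,
    ← sum_image (g := eraseFiber G) (f := fun B => #B - 2)]
  · refine sum_le_sum_of_subset fun B hB => ?_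
    obtain ⟨H, hH, rfl⟩ := mem_image.1 hB
    exact mem_filter.2 ⟨mem_univ _, isHomBlock_eraseFiber G (mem_filter.1 hH).2⟩
  · intro H₁ h₁ H₂ _ h
    obtain ⟨x, hx⟩ : (eraseFiber G H₁).Nonempty := card_pos.1 (by simp at h₁; omega)
    exact ((mem_eraseFiber G).1 hx).symm.trans ((mem_eraseFiber G).1 (h ▸ hx))

lemma card_filter_excess_erase_le (K : ℕ) :
    #{v | excess (erase G v) ≤ K} ≤ 2 * {H ∈ shadow G | excess H ≤ K}.ncard + excess G := by
  classical
  set s : Finset (Fin n) := {v | excess (erase G v) ≤ K}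
  have himage : #(s.image (erase G)) ≤ {H ∈ shadow G | excess H ≤ K}.ncard := by
    rw [← Set.ncard_coe_finset]
    refine Set.ncard_le_ncard (fun H hH => ?_) (Set.toFinite _)
    obtain ⟨v, hv, rfl⟩ := mem_image.1 hH
    exact ⟨⟨v, rfl⟩, (mem_filter.1 hv).2⟩
  have := Finset.card_le_two_mul_card_image_add s (erase G)
  have := sum_card_eraseFiber_sub_two_le G (s.image (erase G))
  unfold eraseFiber at this
  omega

end Deletion

/-- **Lemma (shadows keep the excess small).** For an ordered graph `G` on `[n]` and `r ≥ 1`,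
`|{H ∈ ∂G : m(H) ≤ m(G) + 2r + 1}| ≥ (1/2)(1 − 1/r)n − m(G)/2`. -/
theorem small_excess_in_shadow (n : ℕ) (G : SimpleGraph (Fin n)) (r : ℕ) (hr : 1 ≤ r) :
    (1 / 2 : ℝ) * (1 - 1 / (r : ℝ)) * (n : ℝ) - (excess G : ℝ) / 2 ≤
      (({H ∈ shadow G | excess H ≤ excess G + 2 * r + 1}).ncard : ℝ) := by
  set K := excess G + 2 * r + 1
  have hgood := card_filter_excess_erase_le G K
  have hbad := mul_card_filter_excess_erase_le G r
  have hsplit := card_filter_add_card_filter_not (s := univ)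
    (fun v : Fin n => excess (erase G v) ≤ K)
  simp only [not_le, card_univ, Fintype.card_fin] at hsplit
  set good := #{v | excess (erase G v) ≤ K}
  set bad := #{v | K < excess (erase G v)}
  set S := ({H ∈ shadow G | excess H ≤ K}).ncard
  have hr₀ : (0 : ℝ) < r := by exact_mod_cast hr
  have hbad' : (bad : ℝ) ≤ n / r := by
    rw [le_div_iff₀ hr₀, mul_comm]
    exact_mod_cast hbad
  have hsplit' : (good : ℝ) + bad = n := by exact_mod_cast hsplit
  have hgood' : (good : ℝ) ≤ 2 * S + excess G := by exact_mod_cast hgood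
  rw [show (1 / 2 : ℝ) * (1 - 1 / r) * n = (n - n / r) / 2 by ring]
  linarith

end OrderedGraphs
end

section
/- Let n ≥ 2 and, for each k ∈ [n], let G_k be the ordered graph on [n] with edge set E(G_k) = {ij : 1 ≤ i < j ≤ k}. Then the collection 𝒢_1 = {G_k : k ∈ [n]} satisfies |𝒢_1| = n and |∂𝒢_1| = n − 1. -/
namespace OrderedGraphs

/-- The ordered graph on `[n]` with edge set `{ij : 1 ≤ i < j ≤ k}` (vertices labelled
`1, …, n`; in `Fin n` the vertex labelled `i` is `i - 1`). -/
def cliqueGraph (n k : ℕ) : SimpleGraph (Fin n) where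
  Adj i j := i ≠ j ∧ (i : ℕ) < k ∧ (j : ℕ) < k
  symm := ⟨fun i j h => ⟨h.1.symm, h.2.2, h.2.1⟩⟩
  loopless := ⟨fun i h => h.1 rfl⟩

@[simp]
lemma cliqueGraph_adj {m k : ℕ} {i j : Fin m} :
    (cliqueGraph m k).Adj i j ↔ i ≠ j ∧ (i : ℕ) < k ∧ (j : ℕ) < k := Iff.rfl

lemma cliqueGraph_zero (m : ℕ) : cliqueGraph m 0 = cliqueGraph m 1 := by
  ext i j
  simp only [cliqueGraph_adj, ne_eq, Fin.ext_iff]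
  omega

lemma cliqueGraph_injOn (m : ℕ) : Set.InjOn (cliqueGraph m) (Set.Icc 1 m) := by
  rintro k ⟨hk, hkm⟩ k' ⟨hk', hk'm⟩ h
  by_contra hne
  -- the vertices `1` and `max k k'` are adjacent in exactly one of the two graphs
  have key : (cliqueGraph m k).Adj ⟨0, by omega⟩ ⟨max k k' - 1, by omega⟩ ↔
      (cliqueGraph m k').Adj ⟨0, by omega⟩ ⟨max k k' - 1, by omega⟩ := by rw [h]
  simp only [cliqueGraph_adj, ne_eq, Fin.ext_iff] at key
  omega

lemma ncard_image_cliqueGraph (m : ℕ) : (cliqueGraph m '' Set.Icc 1 m).ncard = m := by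
  rw [(cliqueGraph_injOn m).ncard_image, Set.ncard_Icc_nat]
  omega

lemma delMap_val_s16 {m : ℕ} (v : Fin m) (i : Fin (m - 1)) :
    (delMap v i : ℕ) = if (i : ℕ) < v then (i : ℕ) else (i : ℕ) + 1 := by
  unfold delMap
  split_ifs <;> rfl

lemma erase_cliqueGraph {m k : ℕ} (v : Fin m) :
    erase (cliqueGraph m k) v = cliqueGraph (m - 1) (if (v : ℕ) < k then k - 1 else k) := by
  ext i j
  have := v.isLt
  change (cliqueGraph m k).Adj (delMap v i) (delMap v j) ↔ _
  simp only [cliqueGraph_adj, ne_eq, Fin.ext_iff, delMap_val_s16]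
  split_ifs <;> omega

lemma shadowCol_image_cliqueGraph {m : ℕ} (hm : 2 ≤ m) :
    shadowCol (cliqueGraph m '' Set.Icc 1 m) = cliqueGraph (m - 1) '' Set.Icc 1 (m - 1) := by
  ext H
  simp only [shadowCol, shadow, Set.mem_iUnion, Set.mem_image, Set.mem_Icc]
  constructor
  · rintro ⟨G, ⟨k, ⟨hk, hkm⟩, rfl⟩, v, rfl⟩
    rw [erase_cliqueGraph]
    split_ifs with hv
    · rcases Nat.lt_or_ge k 2 with hk2 | hk2
      · exact ⟨1, ⟨le_rfl, by omega⟩, by rw [show k - 1 = 0 by omega, cliqueGraph_zero]⟩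
      · exact ⟨k - 1, ⟨by omega, by omega⟩, rfl⟩
    · exact ⟨k, ⟨hk, by omega⟩, rfl⟩
  · rintro ⟨k, ⟨hk, hkm⟩, rfl⟩
    refine ⟨cliqueGraph m k, ⟨k, ⟨hk, by omega⟩, rfl⟩, ⟨m - 1, by omega⟩, ?_⟩
    rw [erase_cliqueGraph, Fin.val_mk, if_neg (by omega)]

/-- **Sharpness example.** The collection `𝒢₁ = {G_k : k ∈ [n]}`, where
`E(G_k) = {ij : 1 ≤ i < j ≤ k}`, satisfies `|𝒢₁| = n` and `|∂𝒢₁| = n − 1`. -/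
theorem sharpness_cliques (n : ℕ) (hn : 2 ≤ n) :
    ({G : SimpleGraph (Fin n) | ∃ k, 1 ≤ k ∧ k ≤ n ∧ G = cliqueGraph n k}).ncard = n ∧
    (shadowCol
      {G : SimpleGraph (Fin n) | ∃ k, 1 ≤ k ∧ k ≤ n ∧ G = cliqueGraph n k}).ncard = n - 1 := by
  have hG : {G : SimpleGraph (Fin n) | ∃ k, 1 ≤ k ∧ k ≤ n ∧ G = cliqueGraph n k} =
      cliqueGraph n '' Set.Icc 1 n := by
    ext G
    simp only [Set.mem_ofPred_eq, Set.mem_image, Set.mem_Icc, and_assoc, eq_comm]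
  rw [hG, shadowCol_image_cliqueGraph hn]
  exact ⟨ncard_image_cliqueGraph n, ncard_image_cliqueGraph (n - 1)⟩

end OrderedGraphs
end
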